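/- Consider SDPs min{⟨C, X⟩ : ⟨Aᵢ, X⟩ = bᵢ, X ⪰ 0} with fixed data Aᵢ, b, a fixed feasible point X̂, and suppose at C₀ the dual has a feasible point (ζ̂, Ŝ) with Σᵢ ζ̂ᵢAᵢ + Ŝ = C₀ and all eigenvalues of Ŝ at least σ > 0. Then for any δ ∈ (0, σ/2] and any C with ‖C − C₀‖_F ≤ δ, every primal-feasible X with ⟨Ŝ + C − C₀, X⟩ ≤ ⟨Ŝ + C − C₀, X̂⟩ satisfies ‖X‖_F ≤ (2/σ)(⟨X̂, Ŝ⟩ + δ‖X̂‖_F). -/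

import Mathlib

open Matrix

noncomputable def frob {n : ℕ} (X : Matrix (Fin n) (Fin n) ℝ) : ℝ :=
  Real.sqrt (∑ i, ∑ j, (X i j) ^ 2)

/-
Write `E = C - C₀`. Since `Ŝ ⪰ σ I` and `X ⪰ 0`, `⟨Ŝ, X⟩ ≥ σ tr X ≥ σ ‖X‖_F`, and by
Cauchy–Schwarz `|⟨E, Y⟩| ≤ δ ‖Y‖_F`. Hence the hypothesis `⟨Ŝ + E, X⟩ ≤ ⟨Ŝ + E, X̂⟩` gives
`(σ - δ) ‖X‖_F ≤ ⟨X̂, Ŝ⟩ + δ ‖X̂‖_F`, and `σ - δ ≥ σ / 2`.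
-/

lemma frob_nonneg {n : ℕ} (X : Matrix (Fin n) (Fin n) ℝ) : 0 ≤ frob X :=
  Real.sqrt_nonneg _

lemma abs_trace_mul_le_frob_mul_frob {n : ℕ} (E X : Matrix (Fin n) (Fin n) ℝ) :
    |(E * X).trace| ≤ frob E * frob X := by
  have htrace : (E * X).trace = ∑ q : Fin n × Fin n, E q.1 q.2 * X q.2 q.1 := by
    simp [Matrix.trace, Matrix.mul_apply, Fintype.sum_prod_type]
  have hE : ∑ q : Fin n × Fin n, E q.1 q.2 ^ 2 = ∑ i, ∑ j, E i j ^ 2 :=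
    Fintype.sum_prod_type _
  have hX : ∑ q : Fin n × Fin n, X q.2 q.1 ^ 2 = ∑ i, ∑ j, X i j ^ 2 := by
    rw [Fintype.sum_prod_type, Finset.sum_comm]
  calc |(E * X).trace| = Real.sqrt ((E * X).trace ^ 2) := (Real.sqrt_sq_eq_abs _).symm
    _ ≤ Real.sqrt ((∑ i, ∑ j, E i j ^ 2) * ∑ i, ∑ j, X i j ^ 2) := by
        rw [htrace, ← hE, ← hX]
        exact Real.sqrt_le_sqrt (Finset.sum_mul_sq_le_sq_mul_sq _ _ _)
    _ = frob E * frob X := Real.sqrt_mul (by positivity) _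

namespace Matrix.PosSemidef

variable {ι : Type*}

lemma sq_apply_le_mul_diag {X : Matrix ι ι ℝ} (hX : X.PosSemidef) (i j : ι) :
    X i j ^ 2 ≤ X i i * X j j := by
  have hdet := (hX.submatrix ![i, j]).det_nonneg
  have hsymm : X j i = X i j := hX.isHermitian.apply i j
  simp only [det_fin_two, submatrix_apply, Matrix.cons_val_zero, Matrix.cons_val_one, hsymm,
    ← sq] at hdet
  linarith

lemma trace_mul_nonneg [Fintype ι] {M N : Matrix ι ι ℝ} (hM : M.PosSemidef)
    (hN : N.PosSemidef) :
    0 ≤ (M * N).trace := by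
  classical
  obtain ⟨D, rfl⟩ : ∃ D : Matrix ι ι ℝ, N = star D * D := by
    open scoped MatrixOrder in
    exact CStarAlgebra.nonneg_iff_eq_star_mul_self.mp hN.nonneg
  rw [← mul_assoc, trace_mul_cycle]
  exact (hM.mul_mul_conjTranspose_same D).trace_nonneg

end Matrix.PosSemidef

lemma frob_le_trace {n : ℕ} {X : Matrix (Fin n) (Fin n) ℝ} (hX : X.PosSemidef) :
    frob X ≤ X.trace := by
  have hsq : X.trace ^ 2 = ∑ i, ∑ j, X i i * X j j := by
    rw [Matrix.trace, sq, Finset.sum_mul_sum]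
    rfl
  rw [frob, ← Real.sqrt_sq hX.trace_nonneg, hsq]
  exact Real.sqrt_le_sqrt <| Finset.sum_le_sum fun i _ => Finset.sum_le_sum fun j _ =>
    hX.sq_apply_le_mul_diag i j

lemma mul_frob_le_trace_mul {n : ℕ} {S X : Matrix (Fin n) (Fin n) ℝ} {σ : ℝ} (hσ : 0 ≤ σ)
    (hS : (S - σ • (1 : Matrix (Fin n) (Fin n) ℝ)).PosSemidef) (hX : X.PosSemidef) :
    σ * frob X ≤ (S * X).trace := by
  have hsplit : (S * X).trace = ((S - σ • 1) * X).trace + σ * X.trace := by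
    simp [Matrix.sub_mul, Matrix.trace_sub]
  rw [hsplit]
  nlinarith [hS.trace_mul_nonneg hX, frob_le_trace hX]

theorem stmt12_general (n p : ℕ) (A : Fin p → Matrix (Fin n) (Fin n) ℝ) (b : Fin p → ℝ)
    (Xhat : Matrix (Fin n) (Fin n) ℝ)
    (C₀ Shat : Matrix (Fin n) (Fin n) ℝ)
    (σ : ℝ) (hσ : 0 < σ)
    (hSσ : (Shat - σ • (1 : Matrix (Fin n) (Fin n) ℝ)).PosSemidef) :
    ∀ δ : ℝ, 0 < δ → δ ≤ σ / 2 →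
      ∀ C : Matrix (Fin n) (Fin n) ℝ, frob (C - C₀) ≤ δ →
        ∀ X : Matrix (Fin n) (Fin n) ℝ,
          (∀ i, (A i * X).trace = b i) → X.PosSemidef →
          ((Shat + C - C₀) * X).trace ≤ ((Shat + C - C₀) * Xhat).trace →
          frob X ≤ (2 / σ) * ((Xhat * Shat).trace + δ * frob Xhat) := by
  intro δ _ hδσ C hC X _ hX hopt
  have hsplit (Y : Matrix (Fin n) (Fin n) ℝ) :
      ((Shat + C - C₀) * Y).trace = (Shat * Y).trace + ((C - C₀) * Y).trace := by
    rw [add_sub_assoc, Matrix.add_mul, Matrix.trace_add]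
  have hSX := mul_frob_le_trace_mul hσ.le hSσ hX
  have hEX := (abs_le.mp (abs_trace_mul_le_frob_mul_frob (C - C₀) X)).1
  have hEXhat := (abs_le.mp (abs_trace_mul_le_frob_mul_frob (C - C₀) Xhat)).2
  have hδX := mul_le_mul_of_nonneg_right hC (frob_nonneg X)
  have hδXhat := mul_le_mul_of_nonneg_right hC (frob_nonneg Xhat)
  rw [hsplit, hsplit, trace_mul_comm Shat Xhat] at hopt
  have hmain : σ / 2 * frob X ≤ (Xhat * Shat).trace + δ * frob Xhat := by
    nlinarith [frob_nonneg X]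
  rw [div_mul_eq_mul_div, le_div_iff₀ hσ]
  linarith

/-- Lemma A.1: boundedness of near-optimal primal SDP solutions
under a strictly feasible dual point.  If `Σᵢ ζ̂ᵢAᵢ + Ŝ = C₀` with all eigenvalues
of `Ŝ` at least `σ > 0`, `X̂` is primal feasible, then for any `δ ∈ (0, σ/2]` and
`‖C − C₀‖_F ≤ δ`, any primal feasible `X` with
`⟨Ŝ + C − C₀, X⟩ ≤ ⟨Ŝ + C − C₀, X̂⟩` satisfies
`‖X‖_F ≤ (2/σ)(⟨X̂, Ŝ⟩ + δ‖X̂‖_F)`. -/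
theorem stmt12 (n p : ℕ) (A : Fin p → Matrix (Fin n) (Fin n) ℝ) (b : Fin p → ℝ)
    (Xhat : Matrix (Fin n) (Fin n) ℝ)
    (hXhatfeas : (∀ i, (A i * Xhat).trace = b i) ∧ Xhat.PosSemidef)
    (C₀ Shat : Matrix (Fin n) (Fin n) ℝ) (ζhat : Fin p → ℝ)
    (hdual : ∑ i, ζhat i • A i + Shat = C₀)
    (σ : ℝ) (hσ : 0 < σ)
    (hShat : Shat.IsHermitian) (hSσ : (Shat - σ • (1 : Matrix (Fin n) (Fin n) ℝ)).PosSemidef) :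
    ∀ δ : ℝ, 0 < δ → δ ≤ σ / 2 →
      ∀ C : Matrix (Fin n) (Fin n) ℝ, frob (C - C₀) ≤ δ →
        ∀ X : Matrix (Fin n) (Fin n) ℝ,
          (∀ i, (A i * X).trace = b i) → X.PosSemidef →
          ((Shat + C - C₀) * X).trace ≤ ((Shat + C - C₀) * Xhat).trace →
          frob X ≤ (2 / σ) * ((Xhat * Shat).trace + δ * frob Xhat) :=
  stmt12_general n p A b Xhat C₀ Shat σ hσ hSσ
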